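/- In a subgroup of S₇ isomorphic to the dihedral group D₇ of order 14, each of the numbers 1,...,7 is fixed by exactly one of the 7 involutions of the subgroup. -/

import Mathlib

/-!
A subgroup `H ≅ D₇` of `S₇` contains an element of order 7, which in `S₇` is a 7-cycle, so `H`
acts transitively on `{1,…,7}`. By orbit–stabilizer the stabilizer of a point in `H` has order
`14 / 7 = 2`, and its unique non-trivial element is the only involution of `H` fixing that point.
-/

open Equiv MulAction

namespace Equiv.Perm

variable {α : Type*}

theorem IsCycle.isPretransitive_of_mem {H : Subgroup (Perm α)} {σ : Perm α} (hσ : σ.IsCycle)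
    (hσH : σ ∈ H) (hmoves : ∀ x, σ x ≠ x) : IsPretransitive H α where
  exists_smul_eq x y := by
    obtain ⟨k, hk⟩ := hσ.exists_zpow_eq (hmoves x) (hmoves y)
    exact ⟨⟨σ ^ k, H.zpow_mem hσH k⟩, hk⟩

theorem apply_ne_self_of_orderOf_eq_card [Fintype α] [DecidableEq α] {σ : Perm α}
    (hp : (Fintype.card α).Prime) (hσ : orderOf σ = Fintype.card α) (x : α) : σ x ≠ x := by
  have hsupp : σ.support = Finset.univ :=
    Finset.eq_univ_of_card _ ((isCycle_of_prime_order'' hp hσ).orderOf ▸ hσ)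
  exact mem_support.mp (hsupp ▸ Finset.mem_univ x)

theorem isPretransitive_of_orderOf_eq_card [Fintype α] [DecidableEq α] {H : Subgroup (Perm α)}
    {σ : Perm α} (hp : (Fintype.card α).Prime) (hσH : σ ∈ H) (hσ : orderOf σ = Fintype.card α) :
    IsPretransitive H α :=
  (isCycle_of_prime_order'' hp hσ).isPretransitive_of_mem hσH
    (apply_ne_self_of_orderOf_eq_card hp hσ)

end Equiv.Perm

namespace Subgroup

theorem card_inf_stabilizer_mul_card {G α : Type*} [Group G] [MulAction G α]
    (H : Subgroup G) [IsPretransitive H α] (a : α) :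
    Nat.card ↥(H ⊓ stabilizer G a) * Nat.card α = Nat.card H := by
  rw [← index_stabilizer_of_transitive H a, ← card_mul_index (stabilizer H a)]
  congr 1
  rw [← Nat.card_congr (subgroupOfEquivOfLe (inf_le_left : H ⊓ stabilizer G a ≤ H)).toEquiv,
    inf_subgroupOf_left]
  rfl

theorem existsUnique_orderOf_eq_two_of_card_eq_two {G : Type*} [Group G] (K : Subgroup G)
    (hK : Nat.card K = 2) : ∃! g, g ∈ K ∧ orderOf g = 2 := by
  obtain ⟨c, hc, hc_unique⟩ := (Nat.card_eq_two_iff' (1 : K)).mp hK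
  have orderOf_eq_two_iff (g : K) : orderOf g = 2 ↔ g ≠ 1 := by
    refine ⟨by rintro h rfl; simp at h, fun hg ↦ ?_⟩
    rcases (Nat.dvd_prime Nat.prime_two).mp (hK ▸ _root_.orderOf_dvd_natCard g) with h | h
    exacts [absurd (orderOf_eq_one_iff.mp h) hg, h]
  refine ⟨c, ⟨c.2, by rwa [orderOf_coe, orderOf_eq_two_iff]⟩, ?_⟩
  rintro g ⟨hgK, hg⟩
  exact congrArg Subtype.val
    (hc_unique ⟨g, hgK⟩ ((orderOf_eq_two_iff _).mp (by rwa [orderOf_mk])))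

end Subgroup

/-- In a subgroup of `S₇` isomorphic to the dihedral group `D₇` of order 14, each of the
numbers `1,…,7` is fixed by exactly one of the 7 involutions of the subgroup. -/
theorem dihedral_subgroup_unique_involution_fixing
    (H : Subgroup (Equiv.Perm (Fin 7)))
    (h : Nonempty (↥H ≃* DihedralGroup 7)) (n : Fin 7) :
    ∃! c : Equiv.Perm (Fin 7), c ∈ H ∧ orderOf c = 2 ∧ c n = n := by
  obtain ⟨e⟩ := h
  have hcard : Nat.card H = 14 := (Nat.card_congr e.toEquiv).trans DihedralGroup.nat_card
  have hρ : orderOf (e.symm (DihedralGroup.r 1) : Perm (Fin 7)) = Fintype.card (Fin 7) := by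
    rw [Subgroup.orderOf_coe, MulEquiv.orderOf_eq, DihedralGroup.orderOf_r_one, Fintype.card_fin]
  have : IsPretransitive H (Fin 7) :=
    Perm.isPretransitive_of_orderOf_eq_card (by norm_num) (e.symm _).2 hρ
  have hstab : Nat.card ↥(H ⊓ stabilizer (Perm (Fin 7)) n) = 2 := by
    have := H.card_inf_stabilizer_mul_card n
    rw [hcard, Nat.card_fin] at this
    omega
  refine (existsUnique_congr fun c ↦ ?_).mp
    ((H ⊓ stabilizer (Perm (Fin 7)) n).existsUnique_orderOf_eq_two_of_card_eq_two hstab)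
  rw [Subgroup.mem_inf, mem_stabilizer_iff, Perm.smul_def]
  tauto
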